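/- Let K ≥ 2 and r : Fin K → PMF (Bool × Bool), and for i : Bool define L(i) and U(i) as in the context. Assume L(false) ≤ U(false) and L(true) ≤ U(true), and let a : ℝ satisfy L(true) − U(false) ≤ a ≤ U(true) − L(false). Then there exists μ : PMF ((Fin K → Bool) × (Bool × Bool)) such that for every z : Fin K, μ.map (fun t => (t.1 z, if t.1 z then t.2.2 else t.2.1)) = r z, and μ {t | t.2.2 = true} − μ {t | t.2.1 = true} = a. -/

import Mathlib

/-- The probability (as a real number) that a PMF assigns to a set. -/
noncomputable def pr {α : Type*} (p : PMF α) (s : Set α) : ℝ := (p.toOuterMeasure s).toReal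

lemma univ_nonempty_of_two_le {K : ℕ} (hK : 2 ≤ K) :
    (Finset.univ : Finset (Fin K)).Nonempty :=
  ⟨⟨0, by omega⟩, Finset.mem_univ _⟩

lemma offDiag_nonempty_of_two_le {K : ℕ} (hK : 2 ≤ K) :
    ((Finset.univ : Finset (Fin K)).offDiag).Nonempty :=
  ⟨(⟨0, by omega⟩, ⟨1, by omega⟩),
    Finset.mem_offDiag.mpr ⟨Finset.mem_univ _, Finset.mem_univ _, by simp [Fin.ext_iff]⟩⟩

/-- The sharp lower bound `L(i)` on `π_i = P(Y(x_i) = 1)`: the maximum of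
`r z {(i, 1)}` over `z` and of `r z̃ {y = 1} − r z {(¬i, 1)} − r z {(i, 0)}`
over ordered pairs `z ≠ z̃`. -/
noncomputable def Lbd {K : ℕ} (hK : 2 ≤ K) (r : Fin K → PMF (Bool × Bool)) (i : Bool) : ℝ :=
  max
    (Finset.univ.sup' (univ_nonempty_of_two_le hK) fun z => pr (r z) {(i, true)})
    (Finset.univ.offDiag.sup' (offDiag_nonempty_of_two_le hK) fun zz =>
      pr (r zz.2) {p | p.2 = true} - pr (r zz.1) {(!i, true)} - pr (r zz.1) {(i, false)})

/-- The sharp upper bound `U(i)` on `π_i = P(Y(x_i) = 1)`: the minimum of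
`1 − r z {(i, 0)}` over `z` and of `r z̃ {y = 1} + r z {(i, 1)} + r z {(¬i, 0)}`
over ordered pairs `z ≠ z̃`. -/
noncomputable def Ubd {K : ℕ} (hK : 2 ≤ K) (r : Fin K → PMF (Bool × Bool)) (i : Bool) : ℝ :=
  min
    (Finset.univ.inf' (univ_nonempty_of_two_le hK) fun z => 1 - pr (r z) {(i, false)})
    (Finset.univ.offDiag.inf' (offDiag_nonempty_of_two_le hK) fun zz =>
      pr (r zz.2) {p | p.2 = true} + pr (r zz.1) {(i, true)} + pr (r zz.1) {(!i, false)})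

namespace IVSharp

noncomputable def pp {α : Type*} (p : PMF α) (x : α) : ℝ := (p x).toReal

lemma pp_nonneg {α : Type*} (p : PMF α) (x : α) : 0 ≤ pp p x := ENNReal.toReal_nonneg

lemma ofReal_pp {α : Type*} (p : PMF α) (x : α) : ENNReal.ofReal (pp p x) = p x :=
  ENNReal.ofReal_toReal (p.apply_ne_top x)

lemma pr_eq_sum {α : Type*} [Fintype α] (p : PMF α) (S : Set α) [DecidablePred (· ∈ S)] :
    pr p S = ∑ x, if x ∈ S then pp p x else 0 := by
  rw [pr, PMF.toOuterMeasure_apply, tsum_fintype, ENNReal.toReal_sum]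
  · refine Finset.sum_congr rfl fun x _ => ?_
    by_cases h : x ∈ S <;> simp [Set.indicator, h, pp]
  · intro x _
    by_cases h : x ∈ S <;> simp [Set.indicator, h, p.apply_ne_top x]

lemma pr_singleton {α : Type*} (p : PMF α) (x : α) : pr p {x} = pp p x := by
  rw [pr, PMF.toOuterMeasure_apply_singleton]; rfl

lemma sum_pp_eq_one {α : Type*} [Fintype α] (p : PMF α) : ∑ x, pp p x = 1 := by
  have h := p.tsum_coe
  rw [tsum_fintype] at h
  have := ENNReal.toReal_sum (s := Finset.univ) (f := fun x => p x)
    (fun a _ => p.apply_ne_top a)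
  rw [h] at this
  simpa [pp] using this.symm

lemma pr_snd_true (p : PMF (Bool × Bool)) :
    pr p {q : Bool × Bool | q.2 = true} = pp p (false, true) + pp p (true, true) := by
  rw [pr_eq_sum]
  simp [Fintype.sum_prod_type, Set.mem_setOf_eq]
  ring

lemma sum_four (p : PMF (Bool × Bool)) :
    pp p (false, false) + pp p (false, true) + pp p (true, false) + pp p (true, true) = 1 := by
  have h := sum_pp_eq_one p
  rw [Fintype.sum_prod_type] at h
  simp at h
  linarith

lemma sum_pi_prod {K : ℕ} (h : Fin K → Bool → ℝ) :
    ∑ f : Fin K → Bool, ∏ z, h z (f z) = ∏ z, (h z false + h z true) := by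
  rw [← Fintype.prod_sum h]
  refine Finset.prod_congr rfl fun z _ => ?_
  simp [Fintype.sum_bool]
  ring

lemma sum_pi_eq_one {K : ℕ} (h : Fin K → Bool → ℝ)
    (hs : ∀ z, h z false + h z true = 1) :
    ∑ f : Fin K → Bool, ∏ z, h z (f z) = 1 := by
  rw [sum_pi_prod]
  simp [hs]

lemma sum_pi_cond {K : ℕ} (h : Fin K → Bool → ℝ)
    (hs : ∀ z, h z false + h z true = 1) (z : Fin K) (x : Bool) :
    ∑ f : Fin K → Bool, (if f z = x then ∏ z', h z' (f z') else 0) = h z x := by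
  classical
  set F : Fin K → Bool → ℝ :=
    fun z' b => if z' = z then (if b = x then h z' b else 0) else h z' b with hF
  have key : ∀ f : Fin K → Bool,
      (if f z = x then ∏ z', h z' (f z') else 0) = ∏ z', F z' (f z') := by
    intro f
    by_cases hf : f z = x
    · rw [if_pos hf]
      refine Finset.prod_congr rfl fun z' _ => ?_
      by_cases h1 : z' = z
      · subst h1; simp [hF, hf]
      · simp [hF, h1]
    · rw [if_neg hf]
      symm
      refine Finset.prod_eq_zero (Finset.mem_univ z) ?_
      simp [hF, hf]
  calc ∑ f : Fin K → Bool, (if f z = x then ∏ z', h z' (f z') else 0)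
      = ∑ f : Fin K → Bool, ∏ z', F z' (f z') := Finset.sum_congr rfl fun f _ => key f
    _ = ∏ z', (F z' false + F z' true) := by
        rw [← Fintype.prod_sum F]
        refine Finset.prod_congr rfl fun z' _ => ?_
        simp [Fintype.sum_bool]; ring
    _ = h z x := by
        rw [Finset.prod_eq_single z (fun z' _ hz' => by simp [hF, hz', hs z'])
          (fun hz => absurd (Finset.mem_univ z) hz)]
        cases x <;> simp [hF]

noncomputable def Av {K : ℕ} (r : Fin K → PMF (Bool × Bool)) (z : Fin K) : ℝ :=
  pp (r z) (false, true)
noncomputable def Bv {K : ℕ} (r : Fin K → PMF (Bool × Bool)) (z : Fin K) : ℝ :=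
  pp (r z) (false, false)
noncomputable def Cv {K : ℕ} (r : Fin K → PMF (Bool × Bool)) (z : Fin K) : ℝ :=
  pp (r z) (true, true)
noncomputable def Dv {K : ℕ} (r : Fin K → PMF (Bool × Bool)) (z : Fin K) : ℝ :=
  pp (r z) (true, false)

lemma construct {K : ℕ} (hK : 2 ≤ K) (r : Fin K → PMF (Bool × Bool)) (π0 π1 : ℝ)
    (h1 : ∀ z, Av r z ≤ π0) (h2 : ∀ z, π0 ≤ 1 - Bv r z)
    (h3 : ∀ z, Cv r z ≤ π1) (h4 : ∀ z, π1 ≤ 1 - Dv r z)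
    (h5 : ∀ z z', z ≠ z' → Av r z' + Cv r z' - Cv r z - Bv r z ≤ π0)
    (h6 : ∀ z z', z ≠ z' → π0 ≤ Av r z' + Cv r z' + Av r z + Dv r z)
    (h7 : ∀ z z', z ≠ z' → Av r z' + Cv r z' - Av r z - Dv r z ≤ π1)
    (h8 : ∀ z z', z ≠ z' → π1 ≤ Av r z' + Cv r z' + Cv r z + Bv r z) :
    ∃ μ : PMF ((Fin K → Bool) × (Bool × Bool)),
      (∀ z : Fin K, μ.map (fun t => (t.1 z, if t.1 z then t.2.2 else t.2.1)) = r z) ∧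
      pr μ {t | t.2.2 = true} = π1 ∧ pr μ {t | t.2.1 = true} = π0 := by
  classical
  have hA0 : ∀ z, 0 ≤ Av r z := fun z => pp_nonneg _ _
  have hB0 : ∀ z, 0 ≤ Bv r z := fun z => pp_nonneg _ _
  have hC0 : ∀ z, 0 ≤ Cv r z := fun z => pp_nonneg _ _
  have hD0 : ∀ z, 0 ≤ Dv r z := fun z => pp_nonneg _ _
  have hsum : ∀ z, Bv r z + Av r z + Dv r z + Cv r z = 1 := by
    intro z
    have := sum_four (r z)
    simp only [Av, Bv, Cv, Dv]
    linarith
  have z0 : Fin K := ⟨0, by omega⟩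
  -- choose the joint distribution parameter s for (Y0, Y1)
  have hexs : ∃ s : ℝ, 0 ≤ s ∧ π0 + π1 - 1 ≤ s ∧
      (∀ z, π0 - Av r z - Dv r z ≤ s) ∧ (∀ z, π1 - Bv r z - Cv r z ≤ s) ∧
      s ≤ π0 ∧ s ≤ π1 ∧ (∀ z, s ≤ π0 + π1 - (Av r z + Cv r z)) ∧
      (∀ z, s ≤ Av r z + Cv r z) := by
    set g : Fin K → ℝ := fun z => max 0 (max (π0 + π1 - 1)
      (max (π0 - Av r z - Dv r z) (π1 - Bv r z - Cv r z))) with hg_def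
    have hls : ∀ z, g z ≤ Finset.univ.sup' (univ_nonempty_of_two_le hK) g :=
      fun z => Finset.le_sup' g (Finset.mem_univ z)
    simp only [hg_def] at hls
    refine ⟨Finset.univ.sup' (univ_nonempty_of_two_le hK) g, ?_, ?_, ?_, ?_, ?_, ?_, ?_, ?_⟩
    · exact le_trans (le_max_left _ _) (hls z0)
    · exact le_trans (le_trans (le_max_left _ _) (le_max_right _ _)) (hls z0)
    · intro z
      exact le_trans (le_trans (le_trans (le_max_left _ _) (le_max_right _ _))
        (le_max_right _ _)) (hls z)
    · intro z
      exact le_trans (le_trans (le_trans (le_max_right _ _) (le_max_right _ _))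
        (le_max_right _ _)) (hls z)
    · refine Finset.sup'_le _ _ fun z _ => ?_
      simp only [hg_def]
      refine max_le ?_ (max_le ?_ (max_le ?_ ?_))
      · linarith [h1 z0, hA0 z0]
      · linarith [h4 z, hD0 z]
      · linarith [hA0 z, hD0 z]
      · linarith [h4 z, hsum z, h1 z]
    · refine Finset.sup'_le _ _ fun z _ => ?_
      simp only [hg_def]
      refine max_le ?_ (max_le ?_ (max_le ?_ ?_))
      · linarith [h3 z0, hC0 z0]
      · linarith [h2 z, hB0 z]
      · linarith [h2 z, hsum z, h3 z]
      · linarith [hB0 z, hC0 z]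
    · intro z'
      refine Finset.sup'_le _ _ fun z _ => ?_
      simp only [hg_def]
      refine max_le ?_ (max_le ?_ (max_le ?_ ?_))
      · linarith [h1 z', h3 z']
      · linarith [hsum z', hB0 z', hD0 z']
      · by_cases hzz : z = z'
        · subst hzz; linarith [h3 z, hC0 z, hD0 z]
        · linarith [h7 z z' hzz]
      · by_cases hzz : z = z'
        · subst hzz; linarith [h1 z, hA0 z, hB0 z]
        · linarith [h5 z z' hzz]
    · intro z'
      refine Finset.sup'_le _ _ fun z _ => ?_
      simp only [hg_def]
      refine max_le ?_ (max_le ?_ (max_le ?_ ?_))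
      · linarith [hA0 z', hC0 z']
      · linarith [h2 z', h4 z', hsum z']
      · by_cases hzz : z = z'
        · subst hzz; linarith [h2 z, hsum z, hC0 z, hA0 z]
        · linarith [h6 z z' hzz]
      · by_cases hzz : z = z'
        · subst hzz; linarith [h4 z, hsum z, hC0 z]
        · linarith [h8 z z' hzz]
  obtain ⟨s, hs0, hs1, hsAD, hsBC, hsP0, hsP1, hsE2, hsE1⟩ := hexs
  -- choose the per-z transport parameter t
  have hext : ∀ z : Fin K, ∃ tz : ℝ, 0 ≤ tz ∧
      (1 - π0 - Bv r z) - (π1 - s) ≤ tz ∧ Dv r z - (π0 - s) ≤ tz ∧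
      Dv r z - (π0 - Av r z) ≤ tz ∧ tz ≤ 1 - π0 - π1 + s ∧
      tz ≤ 1 - π0 - Bv r z ∧ tz ≤ Dv r z ∧ tz ≤ s - (π0 - Av r z) + Dv r z := by
    intro z
    refine ⟨max (max 0 ((1 - π0 - Bv r z) - (π1 - s)))
      (max (Dv r z - (π0 - s)) (Dv r z - (π0 - Av r z))), ?_, ?_, ?_, ?_, ?_, ?_, ?_, ?_⟩
    · exact le_trans (le_max_left _ _) (le_max_left _ _)
    · exact le_trans (le_max_right _ _) (le_max_left _ _)
    · exact le_trans (le_max_left _ _) (le_max_right _ _)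
    · exact le_trans (le_max_right _ _) (le_max_right _ _)
    · refine max_le (max_le ?_ ?_) (max_le ?_ ?_)
      · linarith
      · linarith [hB0 z]
      · linarith [h4 z]
      · linarith [hsBC z, hsum z]
    · refine max_le (max_le ?_ ?_) (max_le ?_ ?_)
      · linarith [h2 z]
      · linarith [hsP1]
      · linarith [hsE1 z, hsum z]
      · linarith [hC0 z, hsum z]
    · refine max_le (max_le ?_ ?_) (max_le ?_ ?_)
      · linarith [hD0 z]
      · linarith [hsE2 z, hsum z]
      · linarith [hsP0]
      · linarith [h1 z]
    · refine max_le (max_le ?_ ?_) (max_le ?_ ?_)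
      · linarith [hsAD z]
      · linarith [h3 z, hsum z]
      · linarith [hA0 z]
      · linarith [hs0]
  choose t ht0 htl2 htl3 htl4 htu1 htu2 htu3 htu4 using hext
  -- the joint law of (Y0, Y1)
  set n : Bool → Bool → ℝ := fun y0 y1 =>
    if y0 then (if y1 then s else π0 - s) else (if y1 then π1 - s else 1 - π0 - π1 + s)
    with hn_def
  -- the joint law of (X_z, Y0, Y1) for each z
  set qt : Fin K → Bool → Bool → ℝ := fun z y0 y1 =>
    if y0 then (if y1 then (π0 - Av r z) - Dv r z + t z else Dv r z - t z)
    else (if y1 then (1 - π0 - Bv r z) - t z else t z) with hqt_def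
  set q : Fin K → Bool → Bool → Bool → ℝ := fun z x y0 y1 =>
    if x then qt z y0 y1 else n y0 y1 - qt z y0 y1 with hq_def
  -- conditional law of X_z given (Y0, Y1)
  set w : Fin K → Bool → Bool → Bool → ℝ := fun z y0 y1 x =>
    if n y0 y1 = 0 then (if x then 0 else 1) else q z x y0 y1 / n y0 y1 with hw_def
  set m : ((Fin K → Bool) × (Bool × Bool)) → ℝ := fun tt =>
    n tt.2.1 tt.2.2 * ∏ z, w z tt.2.1 tt.2.2 (tt.1 z) with hm_def
  have hn_nonneg : ∀ y0 y1, 0 ≤ n y0 y1 := by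
    intro y0 y1
    cases y0 <;> cases y1 <;> simp [hn_def] <;> linarith
  have hq_nonneg : ∀ z x y0 y1, 0 ≤ q z x y0 y1 := by
    intro z x y0 y1
    cases x <;> cases y0 <;> cases y1 <;> simp [hq_def, hqt_def, hn_def]
    · linarith [htu1 z]
    · linarith [htl2 z]
    · linarith [htl3 z]
    · linarith [htu4 z]
    · linarith [ht0 z]
    · linarith [htu2 z]
    · linarith [htu3 z]
    · linarith [htl4 z]
  have hq_sum : ∀ z y0 y1, q z false y0 y1 + q z true y0 y1 = n y0 y1 := by
    intro z y0 y1
    simp [hq_def]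
  have hw_nonneg : ∀ z y0 y1 x, 0 ≤ w z y0 y1 x := by
    intro z y0 y1 x
    simp only [hw_def]
    by_cases h : n y0 y1 = 0
    · rw [if_pos h]; cases x <;> norm_num
    · rw [if_neg h]; exact div_nonneg (hq_nonneg z x y0 y1) (hn_nonneg y0 y1)
  have hw_sum : ∀ z y0 y1, w z y0 y1 false + w z y0 y1 true = 1 := by
    intro z y0 y1
    simp only [hw_def]
    by_cases h : n y0 y1 = 0
    · rw [if_pos h, if_pos h]; norm_num
    · rw [if_neg h, if_neg h, ← add_div, hq_sum, div_self h]
  have hnw : ∀ z y0 y1 x, n y0 y1 * w z y0 y1 x = q z x y0 y1 := by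
    intro z y0 y1 x
    simp only [hw_def]
    by_cases h : n y0 y1 = 0
    · rw [if_pos h]
      have h01 := hq_sum z y0 y1
      rw [h] at h01
      have := hq_nonneg z false y0 y1
      have := hq_nonneg z true y0 y1
      cases x <;> simp [h] <;> linarith
    · rw [if_neg h, mul_div_cancel₀ _ h]
  have hm_nonneg : ∀ tt, 0 ≤ m tt := by
    intro tt
    exact mul_nonneg (hn_nonneg _ _) (Finset.prod_nonneg fun z _ => hw_nonneg z _ _ _)
  -- inner sums over functions
  have inner : ∀ y0 y1, ∑ f : Fin K → Bool, m (f, (y0, y1)) = n y0 y1 := by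
    intro y0 y1
    have h1' : ∑ f : Fin K → Bool, ∏ z, w z y0 y1 (f z) = 1 :=
      sum_pi_eq_one _ (fun z => hw_sum z y0 y1)
    calc ∑ f : Fin K → Bool, m (f, (y0, y1))
        = ∑ f : Fin K → Bool, n y0 y1 * ∏ z, w z y0 y1 (f z) := rfl
      _ = n y0 y1 * ∑ f : Fin K → Bool, ∏ z, w z y0 y1 (f z) := by rw [Finset.mul_sum]
      _ = n y0 y1 := by rw [h1', mul_one]
  have hmsum : ∑ tt : (Fin K → Bool) × (Bool × Bool), m tt = 1 := by
    rw [Fintype.sum_prod_type_right]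
    rw [Fintype.sum_prod_type]
    simp only [inner]
    simp only [hn_def]
    simp
  have hofsum : ∑ tt : (Fin K → Bool) × (Bool × Bool), ENNReal.ofReal (m tt) = 1 := by
    rw [← ENNReal.ofReal_sum_of_nonneg (fun tt _ => hm_nonneg tt), hmsum, ENNReal.ofReal_one]
  set μ : PMF ((Fin K → Bool) × (Bool × Bool)) :=
    PMF.ofFintype (fun tt => ENNReal.ofReal (m tt)) hofsum with hμ_def
  have hμ_apply : ∀ tt, μ tt = ENNReal.ofReal (m tt) := fun tt => rfl
  refine ⟨μ, ?_, ?_, ?_⟩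
  · -- the observational consistency condition
    intro z
    refine PMF.ext fun xy => ?_
    obtain ⟨x, y⟩ := xy
    have hmapr : pp (μ.map fun t : (Fin K → Bool) × (Bool × Bool) =>
        (t.1 z, if t.1 z then t.2.2 else t.2.1)) (x, y) = pp (r z) (x, y) := by
      have hmap : pp (μ.map fun t : (Fin K → Bool) × (Bool × Bool) =>
          (t.1 z, if t.1 z then t.2.2 else t.2.1)) (x, y)
          = ∑ a : (Fin K → Bool) × (Bool × Bool),
              (if (x, y) = (a.1 z, if a.1 z then a.2.2 else a.2.1) then m a else 0) := by
        rw [pp, PMF.map_apply, tsum_fintype, ENNReal.toReal_sum]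
        · refine Finset.sum_congr rfl fun a _ => ?_
          by_cases h : (x, y) = (a.1 z, if a.1 z then a.2.2 else a.2.1)
          · rw [if_pos h, if_pos h, hμ_apply, ENNReal.toReal_ofReal (hm_nonneg a)]
          · rw [if_neg h, if_neg h, ENNReal.toReal_zero]
        · intro a _
          by_cases h : (x, y) = (a.1 z, if a.1 z then a.2.2 else a.2.1)
          · rw [if_pos h]; exact μ.apply_ne_top a
          · rw [if_neg h]; exact ENNReal.zero_ne_top
      have cond : ∀ (f : Fin K → Bool) (y0 y1 : Bool),
          (if (x, y) = (f z, if f z then y1 else y0) then m (f, (y0, y1)) else 0)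
            = if (if x then y1 else y0) = y
                then (if f z = x then m (f, (y0, y1)) else 0) else 0 := by
        intro f y0 y1
        by_cases h1 : f z = x
        · by_cases h2 : (if x then y1 else y0) = y
          · have hc : (x, y) = (f z, if f z then y1 else y0) := by rw [h1, h2]
            rw [if_pos hc, if_pos h2, if_pos h1]
          · have hc : ¬ ((x, y) = (f z, if f z then y1 else y0)) := by
              rw [h1]
              intro hcc
              exact h2 ((Prod.ext_iff.mp hcc).2).symm
            rw [if_neg hc, if_neg h2]
        · have hc : ¬ ((x, y) = (f z, if f z then y1 else y0)) := fun hcc =>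
            h1 ((Prod.ext_iff.mp hcc).1).symm
          rw [if_neg hc]
          by_cases h2 : (if x then y1 else y0) = y
          · rw [if_pos h2, if_neg h1]
          · rw [if_neg h2]
      have pull : ∀ y0 y1 : Bool,
          (∑ f : Fin K → Bool, if (if x then y1 else y0) = y
              then (if f z = x then m (f, (y0, y1)) else 0) else 0)
            = if (if x then y1 else y0) = y then q z x y0 y1 else 0 := by
        intro y0 y1
        by_cases h2 : (if x then y1 else y0) = y
        · simp only [if_pos h2]
          calc ∑ f : Fin K → Bool, (if f z = x then m (f, (y0, y1)) else 0)
              = ∑ f : Fin K → Bool,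
                  n y0 y1 * (if f z = x then ∏ z', w z' y0 y1 (f z') else 0) := by
                refine Finset.sum_congr rfl fun f _ => ?_
                rw [mul_ite, mul_zero]
            _ = n y0 y1 * ∑ f : Fin K → Bool,
                  (if f z = x then ∏ z', w z' y0 y1 (f z') else 0) := by
                rw [Finset.mul_sum]
            _ = n y0 y1 * w z y0 y1 x := by
                rw [sum_pi_cond _ (fun z' => hw_sum z' y0 y1) z x]
            _ = q z x y0 y1 := hnw z y0 y1 x
        · simp [h2]
      rw [hmap, Fintype.sum_prod_type_right, Fintype.sum_prod_type]
      simp only [cond, pull]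
      cases x <;> cases y <;>
        simp [Fintype.sum_bool, hq_def, hqt_def, hn_def, Av, Bv, Cv, Dv] <;>
        linarith [sum_four (r z)]
    rw [pp, pp] at hmapr
    exact (ENNReal.toReal_eq_toReal_iff' (PMF.apply_ne_top _ _) (PMF.apply_ne_top _ _)).mp hmapr
  · -- P(Y1 = 1) = π1
    rw [pr_eq_sum]
    have hterm : ∀ tt : (Fin K → Bool) × (Bool × Bool),
        (if tt ∈ {t : (Fin K → Bool) × (Bool × Bool) | t.2.2 = true} then pp μ tt else 0)
          = if tt.2.2 = true then m tt else 0 := by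
      intro tt
      by_cases h : tt.2.2 = true <;>
        simp [h, Set.mem_setOf_eq, pp, hμ_apply, ENNReal.toReal_ofReal (hm_nonneg tt)]
    simp only [hterm]
    rw [Fintype.sum_prod_type_right, Fintype.sum_prod_type]
    have hin : ∀ y0 y1 : Bool,
        (∑ f : Fin K → Bool, if y1 = true then m (f, (y0, y1)) else 0)
          = if y1 = true then n y0 y1 else 0 := by
      intro y0 y1
      by_cases h : y1 = true <;> simp [h, inner]
    simp only [hin]
    simp [hn_def]
  · -- P(Y0 = 1) = π0
    rw [pr_eq_sum]
    have hterm : ∀ tt : (Fin K → Bool) × (Bool × Bool),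
        (if tt ∈ {t : (Fin K → Bool) × (Bool × Bool) | t.2.1 = true} then pp μ tt else 0)
          = if tt.2.1 = true then m tt else 0 := by
      intro tt
      by_cases h : tt.2.1 = true <;>
        simp [h, Set.mem_setOf_eq, pp, hμ_apply, ENNReal.toReal_ofReal (hm_nonneg tt)]
    simp only [hterm]
    rw [Fintype.sum_prod_type_right, Fintype.sum_prod_type]
    have hin : ∀ y0 y1 : Bool,
        (∑ f : Fin K → Bool, if y0 = true then m (f, (y0, y1)) else 0)
          = if y0 = true then n y0 y1 else 0 := by
      intro y0 y1
      by_cases h : y0 = true <;> simp [h, inner]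
    simp only [hin]
    simp [hn_def]

end IVSharp

open IVSharp in
/-- The sharpness claim of Theorem 2: every value `a` of the ACE between
`L(1) − U(0)` and `U(1) − L(0)` is attained by a joint distribution of the counterfactuals
`(X(z₁), …, X(z_K), Y(x₀), Y(x₁))` consistent with the observed laws `r z`. -/
theorem iv_ace_sharpness
    {K : ℕ} (hK : 2 ≤ K) (r : Fin K → PMF (Bool × Bool))
    (hL0 : Lbd hK r false ≤ Ubd hK r false) (hL1 : Lbd hK r true ≤ Ubd hK r true)
    (a : ℝ) (hal : Lbd hK r true - Ubd hK r false ≤ a)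
    (hau : a ≤ Ubd hK r true - Lbd hK r false) :
    ∃ μ : PMF ((Fin K → Bool) × (Bool × Bool)),
      (∀ z : Fin K, μ.map (fun t => (t.1 z, if t.1 z then t.2.2 else t.2.1)) = r z) ∧
      pr μ {t | t.2.2 = true} - pr μ {t | t.2.1 = true} = a := by
  classical
  have hπ1La : Lbd hK r true ≤ max (Lbd hK r true) (a + Lbd hK r false) := le_max_left _ _
  have hπ1Lb : a + Lbd hK r false ≤ max (Lbd hK r true) (a + Lbd hK r false) := le_max_right _ _
  set π1 : ℝ := max (Lbd hK r true) (a + Lbd hK r false) with hπ1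
  set π0 : ℝ := π1 - a with hπ0
  have hπ1U : π1 ≤ Ubd hK r true := max_le hL1 (by linarith)
  have hπ0L : Lbd hK r false ≤ π0 := by linarith
  have hπ0U : π0 ≤ Ubd hK r false := by
    have hm : π1 ≤ a + Ubd hK r false := max_le (by linarith) (by linarith)
    linarith
  clear_value π1 π0
  unfold Lbd at hπ1La hπ0L
  unfold Ubd at hπ1U hπ0U
  obtain ⟨hL1s, hL1p⟩ := max_le_iff.mp hπ1La
  obtain ⟨hL0s, hL0p⟩ := max_le_iff.mp hπ0L
  obtain ⟨hU1s, hU1p⟩ := le_min_iff.mp hπ1U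
  obtain ⟨hU0s, hU0p⟩ := le_min_iff.mp hπ0U
  rw [Finset.sup'_le_iff] at hL1s hL1p hL0s hL0p
  rw [Finset.le_inf'_iff] at hU1s hU1p hU0s hU0p
  have e2 : ∀ (z : Fin K) (xy : Bool × Bool), pr (r z) {xy} = pp (r z) xy :=
    fun z xy => pr_singleton _ _
  obtain ⟨μ, hmap, hp1, hp0⟩ := construct hK r π0 π1
    (fun z => by
      have h := hL0s z (Finset.mem_univ z)
      rw [e2] at h
      exact h)
    (fun z => by
      have h := hU0s z (Finset.mem_univ z)
      rw [e2] at h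
      exact h)
    (fun z => by
      have h := hL1s z (Finset.mem_univ z)
      rw [e2] at h
      exact h)
    (fun z => by
      have h := hU1s z (Finset.mem_univ z)
      rw [e2] at h
      exact h)
    (fun z z' hzz => by
      have h := hL0p (z, z')
        (Finset.mem_offDiag.mpr ⟨Finset.mem_univ _, Finset.mem_univ _, hzz⟩)
      simp only [Bool.not_false] at h
      rw [pr_snd_true, e2, e2] at h
      exact h)
    (fun z z' hzz => by
      have h := hU0p (z, z')
        (Finset.mem_offDiag.mpr ⟨Finset.mem_univ _, Finset.mem_univ _, hzz⟩)
      simp only [Bool.not_false] at h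
      rw [pr_snd_true, e2, e2] at h
      exact h)
    (fun z z' hzz => by
      have h := hL1p (z, z')
        (Finset.mem_offDiag.mpr ⟨Finset.mem_univ _, Finset.mem_univ _, hzz⟩)
      simp only [Bool.not_true] at h
      rw [pr_snd_true, e2, e2] at h
      exact h)
    (fun z z' hzz => by
      have h := hU1p (z, z')
        (Finset.mem_offDiag.mpr ⟨Finset.mem_univ _, Finset.mem_univ _, hzz⟩)
      simp only [Bool.not_true] at h
      rw [pr_snd_true, e2, e2] at h
      exact h)
  exact ⟨μ, hmap, by rw [hp1, hp0]; linarith⟩
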